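/- arXiv:2212.06234 — 5 statements merged into one kernel-verified Lean document; each statement's English description precedes it below -/
import Mathlib

section
/- With $\Omega_B$ and its topology $\mathtt{Top}_{\mathbb{Q}}$ as defined (the compactification of $\mathbb{Z}^2$ with points $\infty_\ast,\infty_\llcorner,\infty_j^{\mathtt{U}},\infty_k^{\mathtt{R}}$ and basis $\mathbb{Q}$), the topological space $(\Omega_B,\mathtt{Top}_{\mathbb{Q}})$ is compact. -/
/-- The magnetic hull `Ω_B`: the compactification of `ℤ²` by the boundary points
`∞_*`, `∞_⌞`, `∞_j^U` (`j ∈ ℤ`) and `∞_k^R` (`k ∈ ℤ`). -/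
inductive OmegaB : Type
  | pt : ℤ × ℤ → OmegaB
  | infAst : OmegaB
  | infCorner : OmegaB
  | infU : ℤ → OmegaB
  | infR : ℤ → OmegaB

namespace OmegaB

/-- `R̄_n = R_n ∪ {∞_{n₂}^R}` where `R_n = {n + j e₁ : j ≥ 0}`. -/
def Rbar (n : ℤ × ℤ) : Set OmegaB :=
  {x | (∃ j : ℤ, 0 ≤ j ∧ x = pt (n.1 + j, n.2)) ∨ x = infR n.2}

/-- `Ū_n = U_n ∪ {∞_{n₁}^U}` where `U_n = {n + j e₂ : j ≥ 0}`. -/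
def Ubar (n : ℤ × ℤ) : Set OmegaB :=
  {x | (∃ j : ℤ, 0 ≤ j ∧ x = pt (n.1, n.2 + j)) ∨ x = infU n.1}

/-- `Q̄_n = Q_n ∪ {∞_⌞} ∪ {∞_j^U : j ≥ n₁} ∪ {∞_j^R : j ≥ n₂}`. -/
def Qbar (n : ℤ × ℤ) : Set OmegaB :=
  {x | (∃ p : ℤ × ℤ, n.1 ≤ p.1 ∧ n.2 ≤ p.2 ∧ x = pt p) ∨ x = infCorner ∨
    (∃ j : ℤ, n.1 ≤ j ∧ x = infU j) ∨ (∃ j : ℤ, n.2 ≤ j ∧ x = infR j)}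

/-- `Q̄_n^c = Q_n^c ∪ {∞_*} ∪ {∞_j^U : j < n₁} ∪ {∞_j^R : j < n₂}`. -/
def Qcbar (n : ℤ × ℤ) : Set OmegaB :=
  {x | (∃ p : ℤ × ℤ, ¬(n.1 ≤ p.1 ∧ n.2 ≤ p.2) ∧ x = pt p) ∨ x = infAst ∨
    (∃ j : ℤ, j < n.1 ∧ x = infU j) ∨ (∃ j : ℤ, j < n.2 ∧ x = infR j)}

/-- The basis collection `ℚ` of subsets of `Ω_B`. -/
def QBasis : Set (Set OmegaB) :=
  {s | (∃ n : ℤ × ℤ, s = {pt n}) ∨ (∃ n : ℤ × ℤ, s = Rbar n) ∨ (∃ n : ℤ × ℤ, s = Ubar n) ∨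
    (∃ n : ℤ × ℤ, s = Qbar n) ∨ (∃ n : ℤ × ℤ, s = Qcbar n)}

end OmegaB

/-- The topology `Top_ℚ` on `Ω_B` generated by the basis `ℚ`. -/
instance : TopologicalSpace OmegaB := TopologicalSpace.generateFrom OmegaB.QBasis

/-!
`Ω_B` is a continuous image of `ℤ̄ × ℤ̄`, where `ℤ̄ = {-∞} ∪ ℤ ∪ {+∞}` carries the order topology
and is compact as a complete linear order. The surjection sends `(j, k)` to the lattice point,
`(j, +∞)` to `∞_j^U`, `(+∞, k)` to `∞_k^R`, `(+∞, +∞)` to `∞_⌞`, and every pair with a coordinate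
`-∞` to `∞_*`. Each basis set of `ℚ` pulls back to a product of rays and singletons of `ℤ̄`, or to
a union of two such products in the case of `Q̄_n^c`, and integers are isolated in `ℤ̄`.
-/

local notation "ℤ̄" => WithTop (WithBot ℤ)

section ExtendedInt

theorem eq_top_or_eq_bot_or_exists_eq_coe (x : ℤ̄) : x = ⊤ ∨ x = ⊥ ∨ ∃ k : ℤ, x = k := by
  rcases x with _ | _ | k
  exacts [.inl rfl, .inr (.inl rfl), .inr (.inr ⟨k, rfl⟩)]

theorem Ici_coe_int_eq_Ioi (k : ℤ) : Set.Ici (k : ℤ̄) = Set.Ioi ((k - 1 : ℤ) : ℤ̄) := by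
  ext x
  obtain rfl | rfl | ⟨a, rfl⟩ := eq_top_or_eq_bot_or_exists_eq_coe x <;> simp

theorem Iic_coe_int_eq_Iio (k : ℤ) : Set.Iic (k : ℤ̄) = Set.Iio ((k + 1 : ℤ) : ℤ̄) := by
  ext x
  obtain rfl | rfl | ⟨a, rfl⟩ := eq_top_or_eq_bot_or_exists_eq_coe x <;>
    simp [bot_lt_iff_ne_bot, -WithBot.coe_add, -WithTop.coe_add]

theorem isOpen_Ici_coe_int (k : ℤ) : IsOpen (Set.Ici (k : ℤ̄)) :=
  Ici_coe_int_eq_Ioi k ▸ isOpen_Ioi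

theorem isOpen_singleton_coe_int (k : ℤ) : IsOpen {(k : ℤ̄)} := by
  rw [← Set.Icc_self, ← Set.Ici_inter_Iic, Iic_coe_int_eq_Iio]
  exact (isOpen_Ici_coe_int k).inter isOpen_Iio

end ExtendedInt

namespace OmegaB

def ofPair : ℤ̄ × ℤ̄ → OmegaB
  | ((⊥ : WithBot ℤ), _) => infAst
  | (_, (⊥ : WithBot ℤ)) => infAst
  | (⊤, ⊤) => infCorner
  | (⊤, ((k : ℤ) : WithBot ℤ)) => infR k
  | (((j : ℤ) : WithBot ℤ), ⊤) => infU j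
  | (((j : ℤ) : WithBot ℤ), ((k : ℤ) : WithBot ℤ)) => pt (j, k)

theorem ofPair_surjective : Function.Surjective ofPair
  | pt (j, k) => ⟨((j : ℤ̄), (k : ℤ̄)), rfl⟩
  | infAst => ⟨(⊥, ⊥), rfl⟩
  | infCorner => ⟨(⊤, ⊤), rfl⟩
  | infU j => ⟨((j : ℤ̄), ⊤), rfl⟩
  | infR k => ⟨(⊤, (k : ℤ̄)), rfl⟩

theorem ofPair_preimage_singleton (n : ℤ × ℤ) :
    ofPair ⁻¹' {pt n} = {(n.1 : ℤ̄)} ×ˢ {(n.2 : ℤ̄)} := by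
  ext ⟨x, y⟩
  obtain rfl | rfl | ⟨a, rfl⟩ := eq_top_or_eq_bot_or_exists_eq_coe x <;>
    obtain rfl | rfl | ⟨b, rfl⟩ := eq_top_or_eq_bot_or_exists_eq_coe y <;>
    simp [ofPair, Prod.ext_iff]

theorem ofPair_preimage_Rbar (n : ℤ × ℤ) :
    ofPair ⁻¹' Rbar n = Set.Ici (n.1 : ℤ̄) ×ˢ {(n.2 : ℤ̄)} := by
  ext ⟨x, y⟩
  obtain rfl | rfl | ⟨a, rfl⟩ := eq_top_or_eq_bot_or_exists_eq_coe x <;>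
    obtain rfl | rfl | ⟨b, rfl⟩ := eq_top_or_eq_bot_or_exists_eq_coe y <;>
    simp [ofPair, Rbar, Prod.ext_iff]
  exact ⟨fun ⟨_, _, ha, hb⟩ => ⟨by omega, hb⟩, fun ⟨ha, hb⟩ => ⟨a - n.1, by omega, by omega, hb⟩⟩

theorem ofPair_preimage_Ubar (n : ℤ × ℤ) :
    ofPair ⁻¹' Ubar n = {(n.1 : ℤ̄)} ×ˢ Set.Ici (n.2 : ℤ̄) := by
  ext ⟨x, y⟩
  obtain rfl | rfl | ⟨a, rfl⟩ := eq_top_or_eq_bot_or_exists_eq_coe x <;>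
    obtain rfl | rfl | ⟨b, rfl⟩ := eq_top_or_eq_bot_or_exists_eq_coe y <;>
    simp [ofPair, Ubar, Prod.ext_iff]
  exact ⟨fun ⟨_, _, ha, hb⟩ => ⟨ha, by omega⟩, fun ⟨ha, hb⟩ => ⟨b - n.2, by omega, ha, by omega⟩⟩

theorem ofPair_preimage_Qbar (n : ℤ × ℤ) :
    ofPair ⁻¹' Qbar n = Set.Ici (n.1 : ℤ̄) ×ˢ Set.Ici (n.2 : ℤ̄) := by
  ext ⟨x, y⟩
  obtain rfl | rfl | ⟨a, rfl⟩ := eq_top_or_eq_bot_or_exists_eq_coe x <;>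
    obtain rfl | rfl | ⟨b, rfl⟩ := eq_top_or_eq_bot_or_exists_eq_coe y <;>
    simp [ofPair, Qbar, Prod.ext_iff]

theorem ofPair_preimage_Qcbar (n : ℤ × ℤ) :
    ofPair ⁻¹' Qcbar n = Set.Iio (n.1 : ℤ̄) ×ˢ Set.univ ∪ Set.univ ×ˢ Set.Iio (n.2 : ℤ̄) := by
  ext ⟨x, y⟩
  obtain rfl | rfl | ⟨a, rfl⟩ := eq_top_or_eq_bot_or_exists_eq_coe x <;>
    obtain rfl | rfl | ⟨b, rfl⟩ := eq_top_or_eq_bot_or_exists_eq_coe y <;>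
    simp [ofPair, Qcbar, Prod.ext_iff, bot_lt_iff_ne_bot]
  omega

theorem continuous_ofPair : Continuous ofPair := by
  refine continuous_generateFrom_iff.2 ?_
  rintro s (⟨n, rfl⟩ | ⟨n, rfl⟩ | ⟨n, rfl⟩ | ⟨n, rfl⟩ | ⟨n, rfl⟩)
  · rw [ofPair_preimage_singleton]
    exact (isOpen_singleton_coe_int _).prod (isOpen_singleton_coe_int _)
  · rw [ofPair_preimage_Rbar]
    exact (isOpen_Ici_coe_int _).prod (isOpen_singleton_coe_int _)
  · rw [ofPair_preimage_Ubar]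
    exact (isOpen_singleton_coe_int _).prod (isOpen_Ici_coe_int _)
  · rw [ofPair_preimage_Qbar]
    exact (isOpen_Ici_coe_int _).prod (isOpen_Ici_coe_int _)
  · rw [ofPair_preimage_Qcbar]
    exact (isOpen_Iio.prod isOpen_univ).union (isOpen_univ.prod isOpen_Iio)

end OmegaB

/-- `(Ω_B, Top_ℚ)` is compact. -/
theorem OmegaB_compact : CompactSpace OmegaB :=
  OmegaB.ofPair_surjective.compactSpace OmegaB.continuous_ofPair
end

section
/- Let $f:\mathbb{Z}^2\to\mathbb{C}$ be a function such that the limits $\lim_{\mathcal{U}_j}f$, $\lim_{\mathcal{R}_j}f$ (for all $j\in\mathbb{Z}$), $\lim_{\mathcal{Q}_\llcorner}f$ and $\lim_{\mathcal{Q}_\ast}f$ along the filters $\mathcal{U}_j$, $\mathcal{R}_j$, $\mathcal{Q}_\llcorner$, $\mathcal{Q}_\ast$ all exist. Then $f$ admits a unique continuous extension $\hat f: \Omega_B \to \mathbb{C}$, defined by $\hat f(\infty_j^{\mathtt{U}})=\lim_{\mathcal{U}_j}f$, $\hat f(\infty_j^{\mathtt{R}})=\lim_{\mathcal{R}_j}f$,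 $\hat f(\infty_\llcorner)=\lim_{\mathcal{Q}_\llcorner}f$, $\hat f(\infty_\ast)=\lim_{\mathcal{Q}_\ast}f$. -/
/-- The filter `𝒰_j` on `ℤ²` generated by the up half-line tails `U_{(j,m)}`. -/
def filtU (j : ℤ) : Filter (ℤ × ℤ) :=
  Filter.generate {s | ∃ m : ℤ, s = {p : ℤ × ℤ | p.1 = j ∧ m ≤ p.2}}

/-- The filter `ℛ_j` on `ℤ²` generated by the right half-line tails `R_{(m,j)}`. -/
def filtR (j : ℤ) : Filter (ℤ × ℤ) :=
  Filter.generate {s | ∃ m : ℤ, s = {p : ℤ × ℤ | p.2 = j ∧ m ≤ p.1}}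

/-- The filter `𝒬_⌞` on `ℤ²` generated by the quarter-planes `Q_n`. -/
def filtQcorner : Filter (ℤ × ℤ) :=
  Filter.generate {s | ∃ n : ℤ × ℤ, s = {p : ℤ × ℤ | n.1 ≤ p.1 ∧ n.2 ≤ p.2}}

/-- The filter `𝒬_*` on `ℤ²` generated by the complements `Q_n^c`. -/
def filtQast : Filter (ℤ × ℤ) :=
  Filter.generate {s | ∃ n : ℤ × ℤ, s = {p : ℤ × ℤ | ¬(n.1 ≤ p.1 ∧ n.2 ≤ p.2)}}

/-!
Every point of `ℤ²` is isolated in `Ω_B`, and the basic neighbourhoods `Ū_n`, `R̄_n` of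
`∞^U_j`, `∞^R_j` meet `ℤ²` exactly in the tails generating `𝒰_j`, `ℛ_j`; so the extension of `f`
by its limits is continuous at these points. A basic neighbourhood `Q̄_n` of `∞_⌞` (or `Q̄_n^c`
of `∞_*`) also contains boundary points `∞^U_k`, `∞^R_k`; their values are limits of `f` along
rays inside `Q_n` (or `Q_n^c`), so they lie in every closed set containing the image of that
region, and
regularity of the target gives continuity there too. Uniqueness holds because all the filters
are proper and the target is Hausdorff.
-/

open Filter Set Topology

theorem Filter.hasBasis_generate_of_directed {α ι : Type*} [Nonempty ι] {s : ι → Set α}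
    (h : Directed (· ⊇ ·) s) : (generate {t | ∃ i, t = s i}).HasBasis (fun _ => True) s := by
  have hrange : {t | ∃ i, t = s i} = range s := by ext; simp [eq_comm]
  rw [hrange, generate_eq_biInf, iInf_range]
  exact hasBasis_iInf_principal h

theorem filtU_hasBasis (j : ℤ) :
    (filtU j).HasBasis (fun _ => True) fun m => {p : ℤ × ℤ | p.1 = j ∧ m ≤ p.2} :=
  hasBasis_generate_of_directed <| Antitone.directed_ge fun _ _ hm _ hp => ⟨hp.1, hm.trans hp.2⟩

theorem filtR_hasBasis (j : ℤ) :
    (filtR j).HasBasis (fun _ => True) fun m => {p : ℤ × ℤ | p.2 = j ∧ m ≤ p.1} :=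
  hasBasis_generate_of_directed <| Antitone.directed_ge fun _ _ hm _ hp => ⟨hp.1, hm.trans hp.2⟩

theorem filtQcorner_hasBasis :
    filtQcorner.HasBasis (fun _ => True) fun n : ℤ × ℤ => {p : ℤ × ℤ | n.1 ≤ p.1 ∧ n.2 ≤ p.2} :=
  hasBasis_generate_of_directed <| Antitone.directed_ge fun _ _ hn _ hp =>
    ⟨(Prod.le_def.1 hn).1.trans hp.1, (Prod.le_def.1 hn).2.trans hp.2⟩

theorem filtQast_hasBasis :
    filtQast.HasBasis (fun _ => True) fun n : ℤ × ℤ => {p : ℤ × ℤ | ¬(n.1 ≤ p.1 ∧ n.2 ≤ p.2)} :=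
  hasBasis_generate_of_directed <| Monotone.directed_ge fun _ _ hn _ hp hle =>
    hp ⟨(Prod.le_def.1 hn).1.trans hle.1, (Prod.le_def.1 hn).2.trans hle.2⟩

instance filtU_neBot (j : ℤ) : (filtU j).NeBot :=
  (filtU_hasBasis j).neBot_iff.2 fun {m} _ => ⟨(j, m), rfl, le_rfl⟩

instance filtR_neBot (j : ℤ) : (filtR j).NeBot :=
  (filtR_hasBasis j).neBot_iff.2 fun {m} _ => ⟨(m, j), rfl, le_rfl⟩

instance filtQcorner_neBot : filtQcorner.NeBot :=
  filtQcorner_hasBasis.neBot_iff.2 fun {n} _ => ⟨n, le_rfl, le_rfl⟩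

instance filtQast_neBot : filtQast.NeBot :=
  filtQast_hasBasis.neBot_iff.2 fun {n} _ => ⟨(n.1 - 1, n.2), fun h => by simp at h⟩

namespace OmegaB

theorem isOpen_of_mem_QBasis {s : Set OmegaB} (hs : s ∈ QBasis) : IsOpen s :=
  TopologicalSpace.GenerateOpen.basic s hs

theorem isOpen_singleton_pt (n : ℤ × ℤ) : IsOpen {pt n} :=
  isOpen_of_mem_QBasis (Or.inl ⟨n, rfl⟩)

theorem Rbar_mem_nhds (n : ℤ × ℤ) : Rbar n ∈ 𝓝 (infR n.2) :=
  (isOpen_of_mem_QBasis (Or.inr (Or.inl ⟨n, rfl⟩))).mem_nhds (Or.inr rfl)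

theorem Ubar_mem_nhds (n : ℤ × ℤ) : Ubar n ∈ 𝓝 (infU n.1) :=
  (isOpen_of_mem_QBasis (Or.inr (Or.inr (Or.inl ⟨n, rfl⟩)))).mem_nhds (Or.inr rfl)

theorem Qbar_mem_nhds (n : ℤ × ℤ) : Qbar n ∈ 𝓝 infCorner :=
  (isOpen_of_mem_QBasis (Or.inr (Or.inr (Or.inr (Or.inl ⟨n, rfl⟩))))).mem_nhds
    (Or.inr (Or.inl rfl))

theorem Qcbar_mem_nhds (n : ℤ × ℤ) : Qcbar n ∈ 𝓝 infAst :=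
  (isOpen_of_mem_QBasis (Or.inr (Or.inr (Or.inr (Or.inr ⟨n, rfl⟩))))).mem_nhds
    (Or.inr (Or.inl rfl))

section Continuity

variable {β : Type*} [TopologicalSpace β] {g : OmegaB → β}

theorem continuousAt_pt (g : OmegaB → β) (n : ℤ × ℤ) : ContinuousAt g (pt n) := by
  rw [ContinuousAt, (isOpen_singleton_iff_nhds_eq_pure _).1 (isOpen_singleton_pt n)]
  exact tendsto_pure_nhds g _

theorem continuousAt_infU {j : ℤ} (h : Tendsto (g ∘ pt) (filtU j) (𝓝 (g (infU j)))) :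
    ContinuousAt g (infU j) := by
  intro s hs
  obtain ⟨m, -, hm⟩ := (filtU_hasBasis j).mem_iff.1 (h hs)
  refine mem_map.2 (mem_of_superset (Ubar_mem_nhds (j, m)) ?_)
  rintro x (⟨k, hk, rfl⟩ | rfl)
  · exact hm ⟨rfl, le_add_of_nonneg_right hk⟩
  · exact (mem_of_mem_nhds hs : _ ∈ s)

theorem continuousAt_infR {j : ℤ} (h : Tendsto (g ∘ pt) (filtR j) (𝓝 (g (infR j)))) :
    ContinuousAt g (infR j) := by
  intro s hs
  obtain ⟨m, -, hm⟩ := (filtR_hasBasis j).mem_iff.1 (h hs)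
  refine mem_map.2 (mem_of_superset (Rbar_mem_nhds (m, j)) ?_)
  rintro x (⟨k, hk, rfl⟩ | rfl)
  · exact hm ⟨rfl, le_add_of_nonneg_right hk⟩
  · exact (mem_of_mem_nhds hs : _ ∈ s)

variable [RegularSpace β]
  (hU : ∀ j, Tendsto (g ∘ pt) (filtU j) (𝓝 (g (infU j))))
  (hR : ∀ j, Tendsto (g ∘ pt) (filtR j) (𝓝 (g (infR j))))
include hU hR

theorem continuousAt_infCorner (hc : Tendsto (g ∘ pt) filtQcorner (𝓝 (g infCorner))) :
    ContinuousAt g infCorner := by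
  refine (closed_nhds_basis _).tendsto_right_iff.2 fun C ⟨hCn, hCc⟩ => ?_
  obtain ⟨n, -, hn⟩ := filtQcorner_hasBasis.mem_iff.1 (hc hCn)
  refine mem_of_superset (Qbar_mem_nhds n) ?_
  rintro x (⟨p, hp₁, hp₂, rfl⟩ | rfl | ⟨k, hk, rfl⟩ | ⟨k, hk, rfl⟩)
  · exact hn ⟨hp₁, hp₂⟩
  · exact (mem_of_mem_nhds hCn : _ ∈ C)
  · exact hCc.mem_of_tendsto (hU k) <| (filtU_hasBasis k).eventually_iff.2
      ⟨n.2, trivial, fun p ⟨hp₁, hp₂⟩ => hn ⟨hp₁ ▸ hk, hp₂⟩⟩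
  · exact hCc.mem_of_tendsto (hR k) <| (filtR_hasBasis k).eventually_iff.2
      ⟨n.1, trivial, fun p ⟨hp₂, hp₁⟩ => hn ⟨hp₁, hp₂ ▸ hk⟩⟩

theorem continuousAt_infAst (ha : Tendsto (g ∘ pt) filtQast (𝓝 (g infAst))) :
    ContinuousAt g infAst := by
  refine (closed_nhds_basis _).tendsto_right_iff.2 fun C ⟨hCn, hCc⟩ => ?_
  obtain ⟨n, -, hn⟩ := filtQast_hasBasis.mem_iff.1 (ha hCn)
  refine mem_of_superset (Qcbar_mem_nhds n) ?_
  rintro x (⟨p, hp, rfl⟩ | rfl | ⟨k, hk, rfl⟩ | ⟨k, hk, rfl⟩)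
  · exact hn hp
  · exact (mem_of_mem_nhds hCn : _ ∈ C)
  · exact hCc.mem_of_tendsto (hU k) <| (filtU_hasBasis k).eventually_iff.2
      ⟨0, trivial, fun p ⟨hp₁, _⟩ => hn fun h : _ ∧ _ => by omega⟩
  · exact hCc.mem_of_tendsto (hR k) <| (filtR_hasBasis k).eventually_iff.2
      ⟨0, trivial, fun p ⟨hp₂, _⟩ => hn fun h : _ ∧ _ => by omega⟩

theorem continuous_of_tendsto_boundary
    (hc : Tendsto (g ∘ pt) filtQcorner (𝓝 (g infCorner)))
    (ha : Tendsto (g ∘ pt) filtQast (𝓝 (g infAst))) : Continuous g :=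
  continuous_iff_continuousAt.2 fun
    | pt n => continuousAt_pt g n
    | infAst => continuousAt_infAst hU hR ha
    | infCorner => continuousAt_infCorner hU hR hc
    | infU _ => continuousAt_infU (hU _)
    | infR _ => continuousAt_infR (hR _)

end Continuity

section LimitExtension

variable {β : Type*} [TopologicalSpace β] {f : ℤ × ℤ → β} {g g' : OmegaB → β}

def IsLimitExtension (f : ℤ × ℤ → β) (g : OmegaB → β) : Prop :=
  (∀ n, g (pt n) = f n) ∧ (∀ j, Tendsto f (filtU j) (𝓝 (g (infU j)))) ∧
    (∀ j, Tendsto f (filtR j) (𝓝 (g (infR j)))) ∧ Tendsto f filtQcorner (𝓝 (g infCorner)) ∧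
    Tendsto f filtQast (𝓝 (g infAst))

theorem exists_isLimitExtension (hU : ∀ j, ∃ y, Tendsto f (filtU j) (𝓝 y))
    (hR : ∀ j, ∃ y, Tendsto f (filtR j) (𝓝 y)) (hc : ∃ y, Tendsto f filtQcorner (𝓝 y))
    (ha : ∃ y, Tendsto f filtQast (𝓝 y)) : ∃ g, IsLimitExtension f g := by
  choose yU hyU using hU
  choose yR hyR using hR
  obtain ⟨yc, hyc⟩ := hc
  obtain ⟨ya, hya⟩ := ha
  exact ⟨fun | pt n => f n | infAst => ya | infCorner => yc | infU j => yU j | infR j => yR j,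
    fun _ => rfl, hyU, hyR, hyc, hya⟩

theorem IsLimitExtension.continuous [RegularSpace β] (h : IsLimitExtension f g) :
    Continuous g := by
  obtain ⟨hpt, hU, hR, hc, ha⟩ := h
  obtain rfl : g ∘ pt = f := funext hpt
  exact continuous_of_tendsto_boundary hU hR hc ha

theorem IsLimitExtension.unique [T2Space β] (h : IsLimitExtension f g)
    (h' : IsLimitExtension f g') : g = g' := by
  obtain ⟨hpt, hU, hR, hc, ha⟩ := h
  obtain ⟨hpt', hU', hR', hc', ha'⟩ := h'
  funext x
  cases x with
  | pt n => rw [hpt, hpt']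
  | infAst => exact tendsto_nhds_unique ha ha'
  | infCorner => exact tendsto_nhds_unique hc hc'
  | infU j => exact tendsto_nhds_unique (hU j) (hU' j)
  | infR j => exact tendsto_nhds_unique (hR j) (hR' j)

end LimitExtension

end OmegaB

open OmegaB Filter in
/-- a function `f : ℤ² → ℂ` whose limits along all the filters `𝒰_j`,
`ℛ_j`, `𝒬_⌞`, `𝒬_*` exist admits a unique continuous extension `f̂ : Ω_B → ℂ`, whose
boundary values are the corresponding filter limits. -/
theorem unique_continuous_extension (f : ℤ × ℤ → ℂ)
    (hU : ∀ j : ℤ, ∃ y : ℂ, Tendsto f (filtU j) (nhds y))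
    (hR : ∀ j : ℤ, ∃ y : ℂ, Tendsto f (filtR j) (nhds y))
    (hQc : ∃ y : ℂ, Tendsto f filtQcorner (nhds y))
    (hQa : ∃ y : ℂ, Tendsto f filtQast (nhds y)) :
    ∃! g : OmegaB → ℂ, Continuous g ∧ (∀ n : ℤ × ℤ, g (pt n) = f n) ∧
      (∀ j : ℤ, Tendsto f (filtU j) (nhds (g (infU j)))) ∧
      (∀ j : ℤ, Tendsto f (filtR j) (nhds (g (infR j)))) ∧
      Tendsto f filtQcorner (nhds (g infCorner)) ∧
      Tendsto f filtQast (nhds (g infAst)) := by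
  obtain ⟨g, hg⟩ := exists_isLimitExtension hU hR hQc hQa
  exact ⟨g, ⟨hg.continuous, hg⟩, fun g' hg' => IsLimitExtension.unique hg'.2 hg⟩
end

section
/- For the quarter-plane magnetic field $B$ with $b_\llcorner-b_\ast\notin 2\pi\mathbb{Z}$ and $f_B(n)=e^{iB(n)}$: for every $\gamma=(\gamma_1,\gamma_2)\in\mathbb{Z}^2$ with $\gamma_1,\gamma_2\geq 0$, the decomposition $\tau_\gamma(f_B) = f_B + (e^{ib_\ast}-e^{ib_\llcorner})\sum_{m=1}^{\gamma_1}\chi_{\mathtt{U}_{(m,\gamma_2+1)}} + (e^{ib_\ast}-e^{ib_\llcorner})\sum_{m=1}^{\gamma_2}\chi_{\mathtt{R}_{(1,m)}}$ holds as functions on $\mathbb{Z}^2$. -/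
/-! `f_B` is the constant `e^{i b_*}` plus `(e^{i b_⌞} - e^{i b_*})` times the indicator of the
quadrant `Q = {n₁ ≥ 1, n₂ ≥ 1}`, and `τ_γ` moves `Q` to `Q + γ ⊆ Q`. For `γ ≥ 0` the difference
`Q \ (Q + γ)` is the disjoint union of the vertical strip `{1 ≤ n₁ ≤ γ₁, n₂ > γ₂}`, which is the union
of the half-lines `U_{(m, γ₂+1)}`, and the horizontal strip `{n₁ ≥ 1, 1 ≤ n₂ ≤ γ₂}`, which is the union
of the half-lines `R_{(1, m)}`. -/

/-- The quarter-plane magnetic field: value `bc` on the first open quadrant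
`{n₁ ≥ 1, n₂ ≥ 1}`, value `ba` elsewhere. -/
noncomputable def Bqp (bc ba : ℝ) (n : ℤ × ℤ) : ℝ :=
  if 1 ≤ n.1 ∧ 1 ≤ n.2 then bc else ba

/-- The flux function `f_B(n) = exp(i B(n))`. -/
noncomputable def fB (bc ba : ℝ) (n : ℤ × ℤ) : ℂ :=
  Complex.exp (Complex.I * (Bqp bc ba n : ℝ))

/-- Characteristic function of the up half-line `U_p = {p + j e₂ : j ≥ 0}`. -/
def chiU (p : ℤ × ℤ) (n : ℤ × ℤ) : ℂ := if n.1 = p.1 ∧ p.2 ≤ n.2 then 1 else 0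

/-- Characteristic function of the right half-line `R_p = {p + j e₁ : j ≥ 0}`. -/
def chiR (p : ℤ × ℤ) (n : ℤ × ℤ) : ℂ := if p.1 ≤ n.1 ∧ n.2 = p.2 then 1 else 0

theorem sum_Icc_chiU (a b c : ℤ) (n : ℤ × ℤ) :
    ∑ m ∈ Finset.Icc a b, chiU (m, c) n = if a ≤ n.1 ∧ n.1 ≤ b ∧ c ≤ n.2 then 1 else 0 := by
  by_cases hc : c ≤ n.2
  · simp [chiU, hc, Finset.sum_ite_eq]
  · simp [chiU, hc]

theorem sum_Icc_chiR (a b c : ℤ) (n : ℤ × ℤ) :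
    ∑ m ∈ Finset.Icc a b, chiR (c, m) n = if c ≤ n.1 ∧ a ≤ n.2 ∧ n.2 ≤ b then 1 else 0 := by
  by_cases hc : c ≤ n.1
  · simp [chiR, hc, Finset.sum_ite_eq]
  · simp [chiR, hc]

theorem fB_eq_add_mul_indicator (bc ba : ℝ) (n : ℤ × ℤ) :
    fB bc ba n = Complex.exp (Complex.I * ba) +
      (Complex.exp (Complex.I * bc) - Complex.exp (Complex.I * ba)) *
        if 1 ≤ n.1 ∧ 1 ≤ n.2 then 1 else 0 := by
  unfold fB Bqp
  split_ifs <;> ring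

theorem quadrant_indicator_eq_shift_add_strips (γ : ℤ × ℤ) (h1 : 0 ≤ γ.1) (h2 : 0 ≤ γ.2)
    (n : ℤ × ℤ) :
    (if 1 ≤ n.1 ∧ 1 ≤ n.2 then (1 : ℂ) else 0) =
      (if 1 ≤ (n - γ).1 ∧ 1 ≤ (n - γ).2 then 1 else 0)
        + (if 1 ≤ n.1 ∧ n.1 ≤ γ.1 ∧ γ.2 + 1 ≤ n.2 then 1 else 0)
        + (if 1 ≤ n.1 ∧ 1 ≤ n.2 ∧ n.2 ≤ γ.2 then 1 else 0) := by
  simp only [Prod.fst_sub, Prod.snd_sub]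
  split_ifs <;> first | (exfalso; omega) | norm_num

theorem tau_fB_decomposition_general (bc ba : ℝ)
    (γ : ℤ × ℤ) (h1 : 0 ≤ γ.1) (h2 : 0 ≤ γ.2) (n : ℤ × ℤ) :
    fB bc ba (n - γ) =
      fB bc ba n
        + (Complex.exp (Complex.I * (ba : ℝ)) - Complex.exp (Complex.I * (bc : ℝ))) *
            (∑ m ∈ Finset.Icc (1 : ℤ) γ.1, chiU (m, γ.2 + 1) n)
        + (Complex.exp (Complex.I * (ba : ℝ)) - Complex.exp (Complex.I * (bc : ℝ))) *
            (∑ m ∈ Finset.Icc (1 : ℤ) γ.2, chiR (1, m) n) := by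
  rw [sum_Icc_chiU, sum_Icc_chiR, fB_eq_add_mul_indicator, fB_eq_add_mul_indicator,
    quadrant_indicator_eq_shift_add_strips γ h1 h2 n]
  ring

/-- the decomposition
`τ_γ(f_B) = f_B + (e^{i b_*} - e^{i b_⌞}) ∑_{m=1}^{γ₁} χ_{U_{(m,γ₂+1)}}
          + (e^{i b_*} - e^{i b_⌞}) ∑_{m=1}^{γ₂} χ_{R_{(1,m)}}` pointwise on `ℤ²`,
for `γ₁, γ₂ ≥ 0`.  Here `(τ_γ g)(n) = g(n - γ)`. -/
theorem tau_fB_decomposition (bc ba : ℝ) (h : ∀ k : ℤ, bc - ba ≠ 2 * Real.pi * k)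
    (γ : ℤ × ℤ) (h1 : 0 ≤ γ.1) (h2 : 0 ≤ γ.2) (n : ℤ × ℤ) :
    fB bc ba (n - γ) =
      fB bc ba n
        + (Complex.exp (Complex.I * (ba : ℝ)) - Complex.exp (Complex.I * (bc : ℝ))) *
            (∑ m ∈ Finset.Icc (1 : ℤ) γ.1, chiU (m, γ.2 + 1) n)
        + (Complex.exp (Complex.I * (ba : ℝ)) - Complex.exp (Complex.I * (bc : ℝ))) *
            (∑ m ∈ Finset.Icc (1 : ℤ) γ.2, chiR (1, m) n) :=
  tau_fB_decomposition_general bc ba γ h1 h2 n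
end

section
/- Let $\mathfrak{r}_0$, $\mathfrak{u}_0$ be the multiplication operators on $\ell^2(\mathbb{Z}^2)$ by the characteristic functions of $\mathtt{R}_0=\{(j,0):j\geq 0\}$ and $\mathtt{U}_0=\{(0,j):j\geq 0\}$, and let $\mathfrak{s}_1,\mathfrak{s}_2$ be magnetic translations. Then the operator $\mathfrak{w}:=(\mathfrak{s}_1-\mathbf{1})\mathfrak{r}_0 + (\mathfrak{s}_2^*-\mathbf{1})\mathfrak{u}_0(\mathbf{1}-\mathfrak{r}_0)+\mathbf{1}$ is unitary. -/
/-!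
On every site `𝔴` multiplies by a phase and pulls `ψ` back along a bijection `τ` of `ℤ²`:
`τ` moves `R₀ ∖ {(0,0)}` one step left, moves `U₀` one step up and fixes every other site, and
the phases are `e^{iA}` on the first set, `e^{-iA}` on `U₀` (from `𝔰₂*`) and `1` elsewhere.
Any operator `(Tψ)(m) = w(m) ψ(τ m)` on `ℓ²` with `τ` bijective and `|w| = 1` sends `δₙ` to
`w(τ⁻¹n) δ_{τ⁻¹n}`, so `(T*ψ)(n) = conj(w(τ⁻¹n)) ψ(τ⁻¹n)`, and `T*T = TT* = 1` pointwise.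
-/

noncomputable section

/-- The Hilbert space `ℓ²(ℤ²)`. -/
abbrev H2 := lp (fun _ : ℤ × ℤ => ℂ) 2

open ContinuousLinearMap

theorem lp.inner_single_one_left {ι : Type*} [DecidableEq ι] (f : lp (fun _ : ι => ℂ) 2)
    (n : ι) : inner ℂ (lp.single 2 n (1 : ℂ)) f = f n := by
  simp [lp.inner_single_left, RCLike.inner_apply]

def IsWeightedPerm {ι : Type*} (T : lp (fun _ : ι => ℂ) 2 →L[ℂ] lp (fun _ : ι => ℂ) 2)
    (σ : Equiv.Perm ι) (w : ι → ℂ) : Prop :=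
  ∀ ψ m, T ψ m = w m * ψ (σ m)

namespace IsWeightedPerm

variable {ι : Type*} {T : lp (fun _ : ι => ℂ) 2 →L[ℂ] lp (fun _ : ι => ℂ) 2}
  {σ : Equiv.Perm ι} {w : ι → ℂ}

theorem apply_single [DecidableEq ι] (hT : IsWeightedPerm T σ w) (n : ι) :
    T (lp.single 2 n 1) = w (σ.symm n) • lp.single 2 (σ.symm n) 1 := by
  ext m
  rw [hT, lp.coeFn_smul, Pi.smul_apply, smul_eq_mul]
  by_cases hm : m = σ.symm n
  · subst hm
    simp
  · rw [lp.single_apply_ne _ _ _ hm, lp.single_apply_ne _ _ _ (fun h => hm (by simp [← h]))]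
    simp

theorem adjoint_apply (hT : IsWeightedPerm T σ w) (ψ : lp (fun _ : ι => ℂ) 2) (n : ι) :
    adjoint T ψ n = starRingEnd ℂ (w (σ.symm n)) * ψ (σ.symm n) := by
  classical
  rw [← lp.inner_single_one_left, adjoint_inner_right, hT.apply_single, inner_smul_left,
    lp.inner_single_one_left]

theorem mem_unitary (hT : IsWeightedPerm T σ w) (hw : ∀ m, ‖w m‖ = 1) :
    T ∈ unitary (lp (fun _ : ι => ℂ) 2 →L[ℂ] lp (fun _ : ι => ℂ) 2) := by
  have hconj : ∀ m, starRingEnd ℂ (w m) * w m = 1 := fun m => by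
    rw [Complex.conj_mul', hw]
    norm_num
  rw [Unitary.mem_iff, star_eq_adjoint]
  constructor
  · ext ψ n
    rw [mul_apply_eq_comp, one_apply_eq_self, hT.adjoint_apply, hT, Equiv.apply_symm_apply,
      ← mul_assoc, hconj, one_mul]
  · ext ψ m
    rw [mul_apply_eq_comp, one_apply_eq_self, hT, hT.adjoint_apply, Equiv.symm_apply_apply,
      ← mul_assoc, mul_comm (w m), hconj, one_mul]

end IsWeightedPerm

def interfacePerm : Equiv.Perm (ℤ × ℤ) where
  toFun m :=
    if 1 ≤ m.1 ∧ m.2 = 0 then (m.1 - 1, m.2)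
    else if m.1 = 0 ∧ 0 ≤ m.2 then (m.1, m.2 + 1) else m
  invFun n :=
    if 0 ≤ n.1 ∧ n.2 = 0 then (n.1 + 1, n.2)
    else if n.1 = 0 ∧ 1 ≤ n.2 then (n.1, n.2 - 1) else n
  left_inv := by
    rintro ⟨a, b⟩
    grind
  right_inv := by
    rintro ⟨a, b⟩
    grind

def interfacePhase (A : ℤ × ℤ → ℤ × ℤ → ℝ) (m : ℤ × ℤ) : ℂ :=
  if 1 ≤ m.1 ∧ m.2 = 0 then Complex.exp (Complex.I * (A m (m - (1, 0)) : ℝ))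
  else if m.1 = 0 ∧ 0 ≤ m.2 then
    starRingEnd ℂ (Complex.exp (Complex.I * (A (m + (0, 1)) m : ℝ)))
  else 1

theorem norm_interfacePhase (A : ℤ × ℤ → ℤ × ℤ → ℝ) (m : ℤ × ℤ) :
    ‖interfacePhase A m‖ = 1 := by
  unfold interfacePhase
  split_ifs <;> simp [Complex.norm_exp_I_mul_ofReal]

theorem isWeightedPerm_interface (A : ℤ × ℤ → ℤ × ℤ → ℝ) (S1 S2 R0 U0 : H2 →L[ℂ] H2)
    (hS1 : ∀ (ψ : H2) (n : ℤ × ℤ),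
      S1 ψ n = Complex.exp (Complex.I * (A n (n - (1, 0)) : ℝ)) * ψ (n - (1, 0)))
    (hS2 : IsWeightedPerm S2 (Equiv.subRight (0, 1))
      (fun n => Complex.exp (Complex.I * (A n (n - (0, 1)) : ℝ))))
    (hR0 : ∀ (ψ : H2) (n : ℤ × ℤ), R0 ψ n = if 0 ≤ n.1 ∧ n.2 = 0 then ψ n else 0)
    (hU0 : ∀ (ψ : H2) (n : ℤ × ℤ), U0 ψ n = if n.1 = 0 ∧ 0 ≤ n.2 then ψ n else 0) :
    IsWeightedPerm ((S1 - 1) * R0 + (adjoint S2 - 1) * U0 * (1 - R0) + 1) interfacePerm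
      (interfacePhase A) := by
  have hS2adj : ∀ (ψ : H2) (n : ℤ × ℤ), adjoint S2 ψ n =
      starRingEnd ℂ (Complex.exp (Complex.I * (A (n + (0, 1)) n : ℝ))) * ψ (n + (0, 1)) := by
    intro ψ n
    simpa using hS2.adjoint_apply ψ n
  intro ψ m
  simp only [add_apply, sub_apply, mul_apply_eq_comp, one_apply_eq_self, lp.coeFn_add,
    lp.coeFn_sub, Pi.add_apply, Pi.sub_apply, hS1, hS2adj, hR0, hU0]
  obtain ⟨a, b⟩ := m
  simp only [interfacePhase, interfacePerm, Equiv.coe_fn_mk, Prod.mk_sub_mk, Prod.mk_add_mk,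
    sub_zero, add_zero]
  split_ifs <;> first | (exfalso; omega) | ring

open ContinuousLinearMap in
/-- the operator `𝔴 = (𝔰₁ - 𝟏) 𝔯₀ + (𝔰₂* - 𝟏) 𝔲₀ (𝟏 - 𝔯₀) + 𝟏` is
unitary, where `𝔯₀`, `𝔲₀` are the multiplication operators by the characteristic
functions of `R₀ = {(j,0) : j ≥ 0}` and `U₀ = {(0,j) : j ≥ 0}`, and `𝔰₁`, `𝔰₂` are
magnetic translations. -/
theorem w_unitary (A : ℤ × ℤ → ℤ × ℤ → ℝ) (S1 S2 R0 U0 : H2 →L[ℂ] H2)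
    (hS1 : ∀ (ψ : H2) (n : ℤ × ℤ),
      S1 ψ n = Complex.exp (Complex.I * (A n (n - (1, 0)) : ℝ)) * ψ (n - (1, 0)))
    (hS2 : ∀ (ψ : H2) (n : ℤ × ℤ),
      S2 ψ n = Complex.exp (Complex.I * (A n (n - (0, 1)) : ℝ)) * ψ (n - (0, 1)))
    (hR0 : ∀ (ψ : H2) (n : ℤ × ℤ), R0 ψ n = if 0 ≤ n.1 ∧ n.2 = 0 then ψ n else 0)
    (hU0 : ∀ (ψ : H2) (n : ℤ × ℤ), U0 ψ n = if n.1 = 0 ∧ 0 ≤ n.2 then ψ n else 0) :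
    adjoint ((S1 - 1) * R0 + (adjoint S2 - 1) * U0 * (1 - R0) + 1) *
        ((S1 - 1) * R0 + (adjoint S2 - 1) * U0 * (1 - R0) + 1) = 1 ∧
      ((S1 - 1) * R0 + (adjoint S2 - 1) * U0 * (1 - R0) + 1) *
        adjoint ((S1 - 1) * R0 + (adjoint S2 - 1) * U0 * (1 - R0) + 1) = 1 := by
  have hW := isWeightedPerm_interface A S1 S2 R0 U0 hS1 hS2 hR0 hU0
  simpa only [Unitary.mem_iff, star_eq_adjoint] using hW.mem_unitary (norm_interfacePhase A)
end
end

section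
/- The dynamical system $(\Omega_B,\tau^*,\mathbb{Z}^2)$ has exactly two ergodic $\tau^*$-invariant Borel probability measures, namely the Dirac measures $\delta_{\infty_\llcorner}$ and $\delta_{\infty_\ast}$. -/
/-- The Borel σ-algebra on `Ω_B`. -/
instance : MeasurableSpace OmegaB := borel OmegaB

/-- The `ℤ²`-action `τ*` on `Ω_B`. -/
def tauAct (γ : ℤ × ℤ) : OmegaB → OmegaB
  | OmegaB.pt n => OmegaB.pt (n + γ)
  | OmegaB.infAst => OmegaB.infAst
  | OmegaB.infCorner => OmegaB.infCorner
  | OmegaB.infU j => OmegaB.infU (j + γ.1)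
  | OmegaB.infR k => OmegaB.infR (k + γ.2)

/-! Points of `ℤ²` and the boundary points `∞_j^U`, `∞_k^R` already have infinite orbits under the
diagonal translations `γ = (i, i)`, so an invariant probability measure, which gives all points of
an orbit the same mass, vanishes on them. As `Ω_B` is countable with Borel singletons, such a
measure lives on the two fixed points `∞_*` and `∞_⌞`, and ergodicity applied to the invariant set
`{∞_*}` leaves only the two Dirac masses. Conversely, a Dirac mass at a fixed point is invariant
and takes only the values `0` and `1`. -/

open MeasureTheory Function Set

namespace MeasureTheory

variable {α : Type*} [MeasurableSpace α] [MeasurableSingletonClass α] {μ : Measure α}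

lemma measure_singleton_eq_zero_of_injective [IsFiniteMeasure μ] {ι : Type*}
    [Infinite ι] {f : ι → α} (hf : Injective f) {c : ENNReal} (hc : ∀ i, μ {f i} = c) : c = 0 := by
  by_contra hc₀
  have hsum : ∑' i, μ {f i} ≤ μ univ :=
    tsum_measure_le_measure_univ (fun _ => (measurableSet_singleton _).nullMeasurableSet)
      fun i j hij => (disjoint_singleton.2 (hf.ne hij)).aedisjoint
  simp only [hc, ENNReal.tsum_const_eq_top_of_ne_zero hc₀, top_le_iff] at hsum
  exact measure_ne_top μ univ hsum

lemma measure_singleton_apply_eq_of_map_eq {f : α → α} (hf : Measurable f)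
    (hinj : Injective f) (hμ : μ.map f = μ) (x : α) : μ {f x} = μ {x} := by
  conv_lhs => rw [← hμ]
  rw [Measure.map_apply hf (measurableSet_singleton _), ← image_singleton, hinj.preimage_image]

lemma eq_dirac_of_measure_singleton_eq_one [IsProbabilityMeasure μ] {a : α}
    (h : μ {a} = 1) : μ = Measure.dirac a := by
  have hae : ∀ᵐ x ∂μ, x ∈ ({a} : Set α) :=
    ae_iff.2 ((prob_compl_eq_zero_iff (measurableSet_singleton a)).2 h)
  rw [← Measure.restrict_eq_self_of_ae_mem hae, Measure.restrict_singleton, h, one_smul]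

end MeasureTheory

namespace OmegaB

@[simp] lemma pt_mem_Qbar {p n : ℤ × ℤ} : pt p ∈ Qbar n ↔ n ≤ p := by
  simp [Qbar, Prod.le_def, Prod.ext_iff]

@[simp] lemma infAst_notMem_Qbar {n : ℤ × ℤ} : infAst ∉ Qbar n := by simp [Qbar]

@[simp] lemma infCorner_mem_Qbar {n : ℤ × ℤ} : infCorner ∈ Qbar n := by simp [Qbar]

@[simp] lemma infU_mem_Qbar {j : ℤ} {n : ℤ × ℤ} : infU j ∈ Qbar n ↔ n.1 ≤ j := by simp [Qbar]

@[simp] lemma infR_mem_Qbar {k : ℤ} {n : ℤ × ℤ} : infR k ∈ Qbar n ↔ n.2 ≤ k := by simp [Qbar]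

lemma eq_of_forall_mem_Qbar_iff {x y : OmegaB} (h : ∀ n, x ∈ Qbar n ↔ y ∈ Qbar n) : x = y := by
  cases x <;> cases y <;> simp only [pt_mem_Qbar, infU_mem_Qbar, infR_mem_Qbar, infCorner_mem_Qbar,
    infAst_notMem_Qbar, iff_true, iff_false, true_iff, false_iff, pt.injEq, infU.injEq, infR.injEq,
    reduceCtorEq] at h ⊢
  case pt.pt p q => exact le_antisymm ((h p).1 le_rfl) ((h q).2 le_rfl)
  case infU.infU j j' => exact le_antisymm ((h (j, 0)).1 le_rfl) ((h (j', 0)).2 le_rfl)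
  case infR.infR k k' => exact le_antisymm ((h (0, k)).1 le_rfl) ((h (0, k')).2 le_rfl)
  case pt.infAst p | infAst.pt p => exact h p le_rfl
  case pt.infCorner p | infCorner.pt p => exact absurd (h (p + 1)) (by simp [Prod.le_def])
  case pt.infU p j | infU.pt j p | pt.infR p j | infR.pt j p =>
    have h₀ := h p
    have h₁ := h (p.1, p.2 + 1)
    have h₂ := h (p.1 + 1, p.2)
    simp only [Prod.le_def] at h₀ h₁ h₂
    omega
  case infAst.infU j | infU.infAst j => exact h (j, 0) le_rfl
  case infAst.infR k | infR.infAst k => exact h (0, k) le_rfl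
  case infCorner.infU j | infU.infCorner j => exact absurd (h (j + 1, 0)) (by simp)
  case infCorner.infR k | infR.infCorner k => exact absurd (h (0, k + 1)) (by simp)
  case infU.infR j k | infR.infU k j => exact absurd (h (j, k + 1)) (by simp)
  case infAst.infCorner | infCorner.infAst => simpa using h 0

instance : Countable OmegaB := by
  refine Surjective.countable (f := Sum.elim pt (Sum.elim infU (Sum.elim infR
    fun b : Bool => if b then infAst else infCorner))) ?_
  rintro (n | _ | _ | j | k)
  exacts [⟨.inl n, rfl⟩, ⟨.inr (.inr (.inr true)), rfl⟩, ⟨.inr (.inr (.inr false)), rfl⟩,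
    ⟨.inr (.inl j), rfl⟩, ⟨.inr (.inr (.inl k)), rfl⟩]

instance : BorelSpace OmegaB := ⟨rfl⟩

lemma isOpen_Qbar (n : ℤ × ℤ) : IsOpen (Qbar n) :=
  .basic _ (.inr (.inr (.inr (.inl ⟨n, rfl⟩))))

instance : MeasurableSpace.CountablySeparated OmegaB :=
  ⟨range Qbar, countable_range _, forall_mem_range.2 fun n => (isOpen_Qbar n).measurableSet,
    fun _ _ _ _ h => eq_of_forall_mem_Qbar_iff fun n => h _ (mem_range_self n)⟩

instance : MeasurableSingletonClass OmegaB :=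
  MeasurableSpace.measurableSingletonClass_of_countablySeparated

lemma tauAct_neg_tauAct (γ : ℤ × ℤ) (x : OmegaB) : tauAct (-γ) (tauAct γ x) = x := by
  cases x <;> simp [tauAct]

lemma tauAct_injective (γ : ℤ × ℤ) : Injective (tauAct γ) :=
  LeftInverse.injective (tauAct_neg_tauAct γ)

lemma injective_tauAct_diag {x : OmegaB} (hast : x ≠ infAst) (hcorner : x ≠ infCorner) :
    Injective fun i : ℤ => tauAct (i, i) x := by
  intro i i' h
  cases x <;> simp_all [tauAct, Prod.ext_iff]

lemma measure_singleton_eq_zero {μ : Measure OmegaB} [IsFiniteMeasure μ]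
    (hμ : ∀ γ, μ.map (tauAct γ) = μ) {x : OmegaB} (hast : x ≠ infAst) (hcorner : x ≠ infCorner) :
    μ {x} = 0 :=
  measure_singleton_eq_zero_of_injective (injective_tauAct_diag hast hcorner) fun _ =>
    measure_singleton_apply_eq_of_map_eq .of_discrete (tauAct_injective _) (hμ _) x

end OmegaB

open MeasureTheory in
/-- the ergodic `τ*`-invariant Borel probability measures on `Ω_B` are
exactly the two Dirac measures `δ_{∞_⌞}` and `δ_{∞_*}`. -/
theorem ergodic_measures_OmegaB (μ : Measure OmegaB) (hp : IsProbabilityMeasure μ) :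
    ((∀ γ : ℤ × ℤ, Measure.map (tauAct γ) μ = μ) ∧
      (∀ s : Set OmegaB, MeasurableSet s → (∀ γ : ℤ × ℤ, tauAct γ ⁻¹' s = s) →
        μ s = 0 ∨ μ s = 1)) ↔
      (μ = Measure.dirac OmegaB.infCorner ∨ μ = Measure.dirac OmegaB.infAst) := by
  constructor
  · rintro ⟨hinv, herg⟩
    have hast_inv (γ : ℤ × ℤ) : tauAct γ ⁻¹' {OmegaB.infAst} = {OmegaB.infAst} := by
      simpa [tauAct] using (OmegaB.tauAct_injective γ).preimage_image {OmegaB.infAst}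
    rcases herg {OmegaB.infAst} (measurableSet_singleton _) hast_inv with hast | hast
    · refine .inl (eq_dirac_of_measure_singleton_eq_one ?_)
      have hnull : μ {OmegaB.infCorner}ᶜ = 0 := by
        refine (measure_null_iff_singleton (to_countable _)).2 fun x hx => ?_
        by_cases hx' : x = OmegaB.infAst
        · rwa [hx']
        · exact OmegaB.measure_singleton_eq_zero hinv hx' hx
      exact (prob_compl_eq_zero_iff (measurableSet_singleton _)).1 hnull
    · exact .inr (eq_dirac_of_measure_singleton_eq_one hast)
  · rintro (rfl | rfl) <;>
      exact ⟨fun γ => by rw [Measure.map_dirac' .of_discrete]; rfl,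
        fun _ _ _ => Measure.dirac_apply_eq_zero_or_one⟩
end
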